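/- arXiv:1111.0702 — 2 statements merged into one kernel-verified Lean document; each statement's English description precedes it below -/
import Mathlib

section
/- Let k be a field, K = k(X), and let E be a locally free sheaf of rank n on ℙ¹_k with generic stalk V = E_ξ (an n-dimensional K-vector space). For nonzero α ∈ V define deg(α) = Σ_P δ_P(α) · deg(P), where δ_P(α) is the largest m with t_P^(-m) α in the stalk E_P. Then the set {deg(α) : α ∈ V, α ≠ 0} is bounded above. -/
open IsDedekindDomain
open scoped Classical

/-- The valuation attached to a place of k(X): an adic valuation for a finite
place (a height-one prime of k[X]) and the valuation at infinity. -/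
noncomputable def placeValuation (k : Type*) [Field k] :
    HeightOneSpectrum (Polynomial k) ⊕ Unit →
      Valuation (RatFunc k) (WithZero (Multiplicative ℤ))
  | Sum.inl P => P.valuation (RatFunc k)
  | Sum.inr _ => FunctionField.inftyValuation k

/-- The degree of a place of k(X). -/
noncomputable def placeDegree (k : Type*) [Field k] :
    HeightOneSpectrum (Polynomial k) ⊕ Unit → ℤ
  | Sum.inl P => Module.finrank k (Polynomial k ⧸ P.asIdeal)
  | Sum.inr _ => 1

/-! Write `v_P` for the order at the place `P`. Factoring numerator and denominator into monic
irreducibles gives the product formula `∑_P v_P(f) deg P = 0` for nonzero `f ∈ k(X)`. Expanding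
`α` in the basis `b_P` shows `v_P(α_j) ≥ δ_P(α) + m_P`, where `m_P` bounds the orders of the
entries of `b_P` from below and can be taken to be `0` when `b_P` is the standard basis. For a
nonzero coordinate `α_j` this gives `deg α ≤ ∑_P (v_P(α_j) - m_P) deg P = -∑_P m_P deg P`, a
bound independent of `α`. -/

open Polynomial UniqueFactorizationMonoid WithZero Function

section Order

variable {K : Type*} [Field K] {w : Valuation K ℤᵐ⁰} {v : K → ℤ}
  (hv : ∀ f, f ≠ 0 → w f = exp (-v f))
include hv

lemma order_one : v 1 = 0 := by
  simpa [eq_comm (a := (1 : ℤᵐ⁰))] using hv 1 one_ne_zero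

lemma order_mul {f g : K} (hf : f ≠ 0) (hg : g ≠ 0) : v (f * g) = v f + v g := by
  have h := w.map_mul f g
  rw [hv _ (mul_ne_zero hf hg), hv _ hf, hv _ hg, ← exp_add, exp_inj] at h
  linarith

lemma le_order_sum {ι : Type*} (s : Finset ι) (g : ι → K) {m : ℤ}
    (h : ∀ i ∈ s, g i ≠ 0 → m ≤ v (g i)) (hs : ∑ i ∈ s, g i ≠ 0) :
    m ≤ v (∑ i ∈ s, g i) := by
  have hle : w (∑ i ∈ s, g i) ≤ exp (-m) := by
    refine w.map_sum_le fun i hi => ?_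
    by_cases hgi : g i = 0
    · simp [hgi]
    · rw [hv _ hgi, exp_le_exp]
      linarith [h i hi hgi]
  rw [hv _ hs, exp_le_exp] at hle
  linarith

lemma add_le_order_apply {ι ι' : Type*} [Fintype ι] (b : Module.Basis ι K (ι' → K))
    {α : ι' → K} {d m : ℤ}
    (hd : d ∈ lowerBounds ((fun i => v (b.repr α i)) '' {i | b.repr α i ≠ 0}))
    (hm : ∀ i j, b i j ≠ 0 → m ≤ v (b i j)) {j : ι'} (hj : α j ≠ 0) :
    d + m ≤ v (α j) := by
  have hα : α j = ∑ i, b.repr α i * b i j := by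
    conv_lhs => rw [← b.sum_repr α]
    simp
  rw [hα] at hj ⊢
  refine le_order_sum hv _ _ (fun i _ hi => ?_) hj
  have hci : b.repr α i ≠ 0 := left_ne_zero_of_mul hi
  have hbi : b i j ≠ 0 := right_ne_zero_of_mul hi
  rw [order_mul hv hci hbi]
  exact add_le_add (hd ⟨i, hci, rfl⟩) (hm i j hbi)

lemma exists_le_order_basis_apply {ι : Type*} [Finite ι]
    (b : Module.Basis ι K (ι → K)) :
    ∃ m : ℤ, (∀ i j, b i j ≠ 0 → m ≤ v (b i j)) ∧ (b = Pi.basisFun K ι → m = 0) := by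
  by_cases hb : b = Pi.basisFun K ι
  · refine ⟨0, fun i j hij => ?_, fun _ => rfl⟩
    subst hb
    obtain rfl : i = j := by
      by_contra hne
      simp [Ne.symm hne] at hij
    simp [order_one hv]
  · obtain ⟨m, hm⟩ := (Set.finite_range fun ij : ι × ι => v (b ij.1 ij.2)).bddBelow
    exact ⟨m, fun i j _ => hm ⟨(i, j), rfl⟩, fun h => absurd h hb⟩

end Order

lemma finsum_sum_type {α β M : Type*} [AddCommMonoid M] {f : α ⊕ β → M}
    (hf : f.HasFiniteSupport) :
    ∑ᶠ x, f x = ∑ᶠ a, f (.inl a) + ∑ᶠ b, f (.inr b) := by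
  rw [← finsum_mem_univ f, ← Set.range_inl_union_range_inr,
    finsum_mem_union' Set.isCompl_range_inl_range_inr.disjoint
      (hf.inter_of_right _) (hf.inter_of_right _),
    finsum_mem_range Sum.inl_injective, finsum_mem_range Sum.inr_injective]

lemma finsum_comp_of_injective_of_support_subset_range {α β M : Type*} [AddCommMonoid M]
    {g : β → α} (hg : Injective g) {f : α → M} (hf : support f ⊆ Set.range g) :
    ∑ᶠ j, f (g j) = ∑ᶠ i, f i := by
  rw [← finsum_mem_range hg, ← finsum_mem_univ f]
  exact finsum_mem_inter_support_eq f _ _ (by rw [Set.univ_inter, Set.inter_eq_right.2 hf])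

namespace IsDedekindDomain.HeightOneSpectrum

variable {k : Type*} [Field k]

noncomputable def normalizedGenerator (P : HeightOneSpectrum k[X]) : k[X] :=
  normalize (Submodule.IsPrincipal.generator P.asIdeal)

lemma span_normalizedGenerator (P : HeightOneSpectrum k[X]) :
    Ideal.span {P.normalizedGenerator} = P.asIdeal := by
  rw [normalizedGenerator, Ideal.span_singleton_eq_span_singleton.2 (normalize_associated _),
    Ideal.span_singleton_generator]

lemma normalize_normalizedGenerator (P : HeightOneSpectrum k[X]) :
    normalize P.normalizedGenerator = P.normalizedGenerator :=
  normalize_idem _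

lemma normalizedGenerator_ne_zero (P : HeightOneSpectrum k[X]) : P.normalizedGenerator ≠ 0 := by
  intro h
  apply P.ne_bot
  rw [← span_normalizedGenerator, h, Ideal.span_singleton_eq_bot]

lemma prime_normalizedGenerator (P : HeightOneSpectrum k[X]) : Prime P.normalizedGenerator :=
  (Ideal.span_singleton_prime P.normalizedGenerator_ne_zero).1
    (P.span_normalizedGenerator ▸ P.isPrime)

lemma normalizedGenerator_injective : Injective (normalizedGenerator (k := k)) := by
  intro P Q h
  ext1
  rw [← span_normalizedGenerator P, ← span_normalizedGenerator Q, h]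

lemma mem_range_normalizedGenerator {p q : k[X]} (hq : q ∈ normalizedFactors p) :
    q ∈ Set.range (normalizedGenerator (k := k)) := by
  have hprime := prime_of_normalized_factor q hq
  let P : HeightOneSpectrum k[X] :=
    ⟨Ideal.span {q}, (Ideal.span_singleton_prime hprime.ne_zero).2 hprime,
      by simpa [Ideal.span_singleton_eq_bot] using hprime.ne_zero⟩
  refine ⟨P, ?_⟩
  have hassoc := Ideal.span_singleton_eq_span_singleton.1 (span_normalizedGenerator P)
  rw [← normalize_normalizedGenerator, normalize_eq_normalize hassoc.dvd hassoc.symm.dvd,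
    normalize_normalized_factor q hq]

end IsDedekindDomain.HeightOneSpectrum

open HeightOneSpectrum

section ProductFormula

variable {k : Type*} [Field k]

lemma placeDegree_inl (P : HeightOneSpectrum k[X]) :
    placeDegree k (.inl P) = P.normalizedGenerator.natDegree := by
  rw [placeDegree, ← span_normalizedGenerator, finrank_quotient_span_eq_natDegree]

lemma placeDegree_nonneg (P : HeightOneSpectrum k[X] ⊕ Unit) : 0 ≤ placeDegree k P := by
  cases P <;> simp [placeDegree]

lemma finsum_count_normalizedFactors_mul_natDegree {p : k[X]} (hp : p ≠ 0) :
    ∑ᶠ P : HeightOneSpectrum k[X],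
      ((normalizedFactors p).count P.normalizedGenerator * P.normalizedGenerator.natDegree : ℤ) =
      p.natDegree := by
  set F : k[X] → ℤ := fun q => (normalizedFactors p).count q * q.natDegree
  have hF : support F ⊆ (normalizedFactors p).toFinset := fun q hq => by
    rw [Finset.mem_coe, Multiset.mem_toFinset, ← Multiset.count_ne_zero]
    exact_mod_cast left_ne_zero_of_mul hq
  have hdeg : p.natDegree = ((normalizedFactors p).map natDegree).sum := by
    rw [← natDegree_multiset_prod _ (zero_notMem_normalizedFactors p)]
    exact natDegree_eq_of_degree_eq
      (degree_eq_degree_of_associated (prod_normalizedFactors hp)).symm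
  change ∑ᶠ P : HeightOneSpectrum k[X], F P.normalizedGenerator = _
  calc ∑ᶠ P : HeightOneSpectrum k[X], F P.normalizedGenerator
      = ∑ᶠ q, F q := finsum_comp_of_injective_of_support_subset_range
        normalizedGenerator_injective fun q hq =>
          mem_range_normalizedGenerator (Multiset.mem_toFinset.1 (hF hq))
    _ = ∑ q ∈ (normalizedFactors p).toFinset, F q := finsum_eq_sum_of_support_subset F hF
    _ = p.natDegree := by
      rw [hdeg, Nat.cast_multiset_sum, Multiset.map_map, Finset.sum_multiset_map_count]
      simp [F, mul_comm]

variable {v : HeightOneSpectrum k[X] ⊕ Unit → RatFunc k → ℤ}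
  (hv : ∀ P f, f ≠ 0 → placeValuation k P f = exp (-v P f))
include hv

lemma order_inl_algebraMap (P : HeightOneSpectrum k[X]) {p : k[X]} (hp : p ≠ 0) :
    v (.inl P) (algebraMap k[X] (RatFunc k) p) =
      (normalizedFactors p).count P.normalizedGenerator := by
  have h := hv (.inl P) _ (RatFunc.algebraMap_ne_zero hp)
  have hspan : Ideal.span {p} ≠ 0 := by simpa [Ideal.span_singleton_eq_bot] using hp
  rw [placeValuation, P.valuation_of_algebraMap, P.intValuation_if_neg hp, exp_inj, neg_inj,
    Ideal.count_associates_factors_eq hspan P.isPrime P.ne_bot, ← span_normalizedGenerator,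
    Ideal.count_span_normalizedFactors_eq hp P.prime_normalizedGenerator,
    normalize_normalizedGenerator] at h
  exact h.symm

lemma order_inr_algebraMap (u : Unit) {p : k[X]} (hp : p ≠ 0) :
    v (.inr u) (algebraMap k[X] (RatFunc k) p) = -p.natDegree := by
  have h := hv (.inr u) _ (RatFunc.algebraMap_ne_zero hp)
  change RatFunc.inftyValuation k _ = _ at h
  rw [RatFunc.inftyValuation_apply, RatFunc.inftyValuation.polynomial _ hp, exp_inj] at h
  linarith

lemma hasFiniteSupport_order_algebraMap {p : k[X]} (hp : p ≠ 0) :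
    HasFiniteSupport fun P => v P (algebraMap k[X] (RatFunc k) p) := by
  refine ((((normalizedFactors p).toFinset.finite_toSet.preimage
    normalizedGenerator_injective.injOn).image Sum.inl).union (Set.finite_range Sum.inr)).subset ?_
  rintro (P | u) hP
  · refine Or.inl ⟨P, ?_, rfl⟩
    rw [mem_support, order_inl_algebraMap hv P hp, Nat.cast_ne_zero, Multiset.count_ne_zero] at hP
    exact Multiset.mem_toFinset.2 hP
  · exact Or.inr ⟨u, rfl⟩

lemma finsum_order_algebraMap_mul_placeDegree {p : k[X]} (hp : p ≠ 0) :
    ∑ᶠ P, v P (algebraMap k[X] (RatFunc k) p) * placeDegree k P = 0 := by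
  rw [finsum_sum_type ((hasFiniteSupport_order_algebraMap hv hp).fun_mul_left _)]
  simp only [order_inl_algebraMap hv _ hp, placeDegree_inl, order_inr_algebraMap hv _ hp,
    finsum_count_normalizedFactors_mul_natDegree hp, finsum_unique]
  simp [placeDegree]

lemma order_eq_order_num_sub_order_denom (P : HeightOneSpectrum k[X] ⊕ Unit) {f : RatFunc k}
    (hf : f ≠ 0) :
    v P f =
      v P (algebraMap k[X] (RatFunc k) f.num) - v P (algebraMap k[X] (RatFunc k) f.denom) := by
  have hdenom := RatFunc.algebraMap_ne_zero f.denom_ne_zero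
  have h := order_mul (hv P) hf hdenom
  rw [← (div_eq_iff hdenom).1 f.num_div_denom] at h
  linarith

lemma hasFiniteSupport_order {f : RatFunc k} (hf : f ≠ 0) : HasFiniteSupport fun P => v P f := by
  simpa only [order_eq_order_num_sub_order_denom hv _ hf] using
    (hasFiniteSupport_order_algebraMap hv (RatFunc.num_ne_zero hf)).fun_sub
      (hasFiniteSupport_order_algebraMap hv f.denom_ne_zero)

theorem finsum_order_mul_placeDegree {f : RatFunc k} (hf : f ≠ 0) :
    ∑ᶠ P, v P f * placeDegree k P = 0 := by
  simp only [order_eq_order_num_sub_order_denom hv _ hf, sub_mul]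
  rw [finsum_sub_distrib
    ((hasFiniteSupport_order_algebraMap hv (RatFunc.num_ne_zero hf)).fun_mul_left _)
    ((hasFiniteSupport_order_algebraMap hv f.denom_ne_zero).fun_mul_left _),
    finsum_order_algebraMap_mul_placeDegree hv (RatFunc.num_ne_zero hf),
    finsum_order_algebraMap_mul_placeDegree hv f.denom_ne_zero, sub_zero]

end ProductFormula

lemma hasFiniteSupport_of_mem_image_order_repr {X K ι : Type*} [Semiring K] [Finite ι]
    {v : X → K → ℤ} (hv : ∀ f, f ≠ 0 → HasFiniteSupport fun P => v P f)
    {b : X → Module.Basis ι K (ι → K)} (hb : {P | b P ≠ Pi.basisFun K ι}.Finite)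
    {α : ι → K} {δ : X → ℤ}
    (hδ : ∀ P, δ P ∈ (fun i => v P ((b P).repr α i)) '' {i | (b P).repr α i ≠ 0}) :
    HasFiniteSupport δ := by
  refine (hb.union (Set.finite_iUnion fun i : {i // α i ≠ 0} => hv _ i.2)).subset fun P hP => ?_
  by_cases hbP : b P = Pi.basisFun K ι
  · obtain ⟨i, hi, hδi⟩ := hδ P
    simp only [hbP, Pi.basisFun_repr] at hi hδi
    exact Or.inr (Set.mem_iUnion.2 ⟨⟨i, hi⟩, by simpa [hδi] using hP⟩)
  · exact Or.inl hbP

/-- A rank-n vector bundle E on ℙ¹_k is described, via its stalks inside the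
generic stalk V = E_ξ ≅ k(X)ⁿ, by a family of lattices: for each place P of
k(X) a basis b_P of V whose O_P-span is the stalk E_P, with b_P the standard
basis for all but finitely many P.  The order of a nonzero α ∈ V at P is
δ_P(α) = max {m | t_P^(-m) α ∈ E_P} = min over the nonzero b_P-coordinates c of
α of v_P(c), and deg(α) = Σ_P δ_P(α)·deg(P). -/
theorem stmt11_general (k : Type*) [Field k] (n : ℕ)
    (v : (HeightOneSpectrum (Polynomial k) ⊕ Unit) → RatFunc k → ℤ)
    (hv : ∀ P (f : RatFunc k), f ≠ 0 → placeValuation k P f =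
      ((Multiplicative.ofAdd (-(v P f)) : Multiplicative ℤ) :
        WithZero (Multiplicative ℤ)))
    (b : (HeightOneSpectrum (Polynomial k) ⊕ Unit) →
      Module.Basis (Fin n) (RatFunc k) (Fin n → RatFunc k))
    (hb : {P | b P ≠ Pi.basisFun (RatFunc k) (Fin n)}.Finite)
    (δ : (HeightOneSpectrum (Polynomial k) ⊕ Unit) → (Fin n → RatFunc k) → ℤ)
    (hδ : ∀ P (α : Fin n → RatFunc k), α ≠ 0 →
      IsLeast ((fun i => v P ((b P).repr α i)) '' {i | (b P).repr α i ≠ 0})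
        (δ P α)) :
    ∃ B : ℤ, ∀ α : Fin n → RatFunc k, α ≠ 0 →
      (∑ᶠ P, δ P α * placeDegree k P) ≤ B := by
  choose m hm hm_basisFun using fun P => exists_le_order_basis_apply (hv P) (b P)
  have hm_fin : HasFiniteSupport m := hb.subset fun P hP hbP => hP (hm_basisFun P hbP)
  refine ⟨-∑ᶠ P, m P * placeDegree k P, fun α hα => ?_⟩
  obtain ⟨j, hj⟩ := Function.ne_iff.1 hα
  have hδ_fin : HasFiniteSupport fun P => δ P α :=
    hasFiniteSupport_of_mem_image_order_repr (fun _ hf => hasFiniteSupport_order hv hf) hb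
      fun P => (hδ P α hα).1
  have hv_fin := hasFiniteSupport_order hv hj
  calc ∑ᶠ P, δ P α * placeDegree k P
      ≤ ∑ᶠ P, (v P (α j) - m P) * placeDegree k P :=
        finsum_le_finsum' (hδ_fin.fun_mul_left _) ((hv_fin.fun_sub hm_fin).fun_mul_left _)
          fun P => mul_le_mul_of_nonneg_right (le_sub_iff_add_le.2
            (add_le_order_apply (hv P) (b P) (hδ P α hα).2 (hm P) hj)) (placeDegree_nonneg P)
    _ = ∑ᶠ P, v P (α j) * placeDegree k P - ∑ᶠ P, m P * placeDegree k P := by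
        simp only [sub_mul]
        exact finsum_sub_distrib (hv_fin.fun_mul_left _) (hm_fin.fun_mul_left _)
    _ = -∑ᶠ P, m P * placeDegree k P := by
        rw [finsum_order_mul_placeDegree hv hj, zero_sub]

/-- A rank-n vector bundle E on ℙ¹_k is described, via its stalks inside the
generic stalk V = E_ξ ≅ k(X)ⁿ, by a family of lattices: for each place P of
k(X) a basis b_P of V whose O_P-span is the stalk E_P, with b_P the standard
basis for all but finitely many P.  The order of a nonzero α ∈ V at P is
δ_P(α) = max {m | t_P^(-m) α ∈ E_P} = min over the nonzero b_P-coordinates c of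
α of v_P(c), and deg(α) = Σ_P δ_P(α)·deg(P).  Then {deg(α) : α ≠ 0} is bounded
above. -/
theorem stmt11 (k : Type*) [Field k] (n : ℕ) (hn : 1 ≤ n)
    (v : (HeightOneSpectrum (Polynomial k) ⊕ Unit) → RatFunc k → ℤ)
    (hv : ∀ P (f : RatFunc k), f ≠ 0 → placeValuation k P f =
      ((Multiplicative.ofAdd (-(v P f)) : Multiplicative ℤ) :
        WithZero (Multiplicative ℤ)))
    (b : (HeightOneSpectrum (Polynomial k) ⊕ Unit) →
      Module.Basis (Fin n) (RatFunc k) (Fin n → RatFunc k))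
    (hb : {P | b P ≠ Pi.basisFun (RatFunc k) (Fin n)}.Finite)
    (δ : (HeightOneSpectrum (Polynomial k) ⊕ Unit) → (Fin n → RatFunc k) → ℤ)
    (hδ : ∀ P (α : Fin n → RatFunc k), α ≠ 0 →
      IsLeast ((fun i => v P ((b P).repr α i)) '' {i | (b P).repr α i ≠ 0})
        (δ P α)) :
    ∃ B : ℤ, ∀ α : Fin n → RatFunc k, α ≠ 0 →
      (∑ᶠ P, δ P α * placeDegree k P) ≤ B :=
  stmt11_general k n v hv b hb δ hδ
end

section
/- Let R be a discrete valuation ring with uniformizer t, K its fraction field, M a finite free R-module inside V = K ⊗_R M, and δ(β) = max {n | β ∈ t^n • M} for nonzero β. If e₁, ..., eₙ is a K-basis of V such that for all f₁, ..., fₙ ∈ K (not all zero), δ(Σᵢ fᵢ eᵢ) = minᵢ {δ(fᵢ eᵢ) : fᵢ ≠ 0}, then M = ⊕ᵢ (M ∩ K·eᵢ), i.e., M is the internal direct sum of its intersections with the lines spanned by the eᵢ. -/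
/-!
For `β ∈ M` we have `δ β ≥ 0`, and the splitting hypothesis gives `δ (βᵢ • eᵢ) ≥ δ β` for every
nonzero coordinate `βᵢ`; since `δ γ ≥ 0` forces `γ ∈ M`, every component `βᵢ • eᵢ` of `β` lies in
`M ∩ K·eᵢ`. Independence of these pieces is inherited from that of the lines `K·eᵢ`.
-/

theorem Submodule.iSupIndep_restrictScalars {R K V ι : Type*} [Semiring R] [Semiring K]
    [AddCommMonoid V] [Module R V] [Module K V] [SMul R K] [IsScalarTower R K V]
    {p : ι → Submodule K V} (hp : iSupIndep p) :
    iSupIndep fun i => (p i).restrictScalars R := fun i => by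
  simpa only [disjoint_iff, ← restrictScalars_iSup, ← restrictScalars_inf,
    restrictScalars_eq_bot_iff] using hp i

section

variable {R K V : Type*} [CommRing R] [Field K] [Algebra R K]
  [AddCommGroup V] [Module K V] [Module R V] [IsScalarTower R K V]

theorem Submodule.mem_of_zpow_smul_mem {M : Submodule R V} {t : R}
    (ht : algebraMap R K t ≠ 0) {β : V} {m : ℤ} (hm : 0 ≤ m)
    (h : algebraMap R K t ^ (-m) • β ∈ M) : β ∈ M := by
  lift m to ℕ using hm
  have hβ : β = t ^ m • algebraMap R K t ^ (-(m : ℤ)) • β := by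
    rw [← algebraMap_smul K, smul_smul, map_pow, ← zpow_natCast, ← zpow_add₀ ht, add_neg_cancel,
      zpow_zero, one_smul]
  rw [hβ]
  exact M.smul_mem _ h

theorem Module.Basis.iSup_inf_restrictScalars_span_singleton_eq {ι : Type*} [Fintype ι]
    (e : Module.Basis ι K V) {M : Submodule R V} (hM : ∀ β ∈ M, ∀ i, e.repr β i • e i ∈ M) :
    ⨆ i, M ⊓ (Submodule.span K {e i}).restrictScalars R = M := by
  refine le_antisymm (iSup_le fun i => inf_le_left) fun β hβ => ?_
  rw [← e.sum_repr β]
  exact Submodule.sum_mem _ fun i _ => Submodule.mem_iSup_of_mem i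
    ⟨hM β hβ i, Submodule.smul_mem _ _ (Submodule.mem_span_singleton_self _)⟩

theorem Module.Basis.iSupIndep_inf_restrictScalars_span_singleton {ι : Type*}
    (e : Module.Basis ι K V) (N : ι → Submodule R V) :
    iSupIndep fun i => N i ⊓ (Submodule.span K {e i}).restrictScalars R :=
  (Submodule.iSupIndep_restrictScalars e.linearIndependent.iSupIndep_span_singleton).mono
    fun _ => inf_le_right

theorem Module.Basis.repr_smul_mem_of_isLeast_delta_sum {ι : Type*} [Fintype ι]
    {M : Submodule R V} {t : R} (ht : algebraMap R K t ≠ 0) {δ : V → ℤ}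
    (hδ : ∀ β : V, β ≠ 0 → IsGreatest {n : ℤ | (algebraMap R K t) ^ (-n) • β ∈ M} (δ β))
    (e : Module.Basis ι K V)
    (hsplit : ∀ f : ι → K, (∃ i, f i ≠ 0) →
      IsLeast {d : ℤ | ∃ i, f i ≠ 0 ∧ d = δ (f i • e i)} (δ (∑ i, f i • e i)))
    {β : V} (hβ : β ∈ M) (i : ι) : e.repr β i • e i ∈ M := by
  by_cases hβi : e.repr β i = 0
  · simp [hβi]
  have hβ0 : β ≠ 0 := fun h => hβi (by simp [h])
  have hδβ : 0 ≤ δ β := (hδ β hβ0).2 (by simpa using hβ)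
  have hle : δ β ≤ δ (e.repr β i • e i) := by
    simpa only [e.sum_repr] using (hsplit (e.repr β) ⟨i, hβi⟩).2 ⟨i, hβi, rfl⟩
  exact Submodule.mem_of_zpow_smul_mem ht (hδβ.trans hle) (hδ _ (smul_ne_zero hβi (e.ne_zero i))).1

end

theorem stmt13_general {R : Type*} [CommRing R]
    {K : Type*} [Field K] [Algebra R K] [IsFractionRing R K]
    (t : R) (ht : Irreducible t)
    {V : Type*} [AddCommGroup V] [Module K V] [Module R V] [IsScalarTower R K V]
    (M : Submodule R V)
    (δ : V → ℤ)
    (hδ : ∀ β : V, β ≠ 0 →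
      IsGreatest {n : ℤ | (algebraMap R K t) ^ (-n) • β ∈ M} (δ β))
    (n : ℕ)
    (e : Module.Basis (Fin n) K V)
    (hsplit : ∀ f : Fin n → K, (∃ i, f i ≠ 0) →
      IsLeast {d : ℤ | ∃ i, f i ≠ 0 ∧ d = δ (f i • e i)} (δ (∑ i, f i • e i))) :
    (⨆ i, M ⊓ (Submodule.span K {e i}).restrictScalars R) = M ∧
      iSupIndep (fun i => M ⊓ (Submodule.span K {e i}).restrictScalars R) := by
  have htK : algebraMap R K t ≠ 0 :=
    (map_ne_zero_iff _ (IsFractionRing.injective R K)).mpr ht.ne_zero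
  exact ⟨e.iSup_inf_restrictScalars_span_singleton_eq fun β hβ =>
      e.repr_smul_mem_of_isLeast_delta_sum htK hδ hsplit hβ,
    e.iSupIndep_inf_restrictScalars_span_singleton fun _ => M⟩

/-- If a K-basis e of V satisfies δ(Σ fᵢeᵢ) = minᵢ δ(fᵢeᵢ) (minimum over the
nonzero coefficients), then M is the internal direct sum of its intersections
with the lines K·eᵢ. -/
theorem stmt13 {R : Type*} [CommRing R] [IsDomain R] [IsDiscreteValuationRing R]
    {K : Type*} [Field K] [Algebra R K] [IsFractionRing R K]
    (t : R) (ht : Irreducible t)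
    {V : Type*} [AddCommGroup V] [Module K V] [Module R V] [IsScalarTower R K V]
    (M : Submodule R V) [Module.Free R M] [Module.Finite R M]
    (hspan : Submodule.span K (M : Set V) = ⊤)
    (δ : V → ℤ)
    (hδ : ∀ β : V, β ≠ 0 →
      IsGreatest {n : ℤ | (algebraMap R K t) ^ (-n) • β ∈ M} (δ β))
    (n : ℕ) (hrk : Module.finrank R ↥M = n)
    (e : Module.Basis (Fin n) K V)
    (hsplit : ∀ f : Fin n → K, (∃ i, f i ≠ 0) →
      IsLeast {d : ℤ | ∃ i, f i ≠ 0 ∧ d = δ (f i • e i)} (δ (∑ i, f i • e i))) :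
    (⨆ i, M ⊓ (Submodule.span K {e i}).restrictScalars R) = M ∧
      iSupIndep (fun i => M ⊓ (Submodule.span K {e i}).restrictScalars R) :=
  stmt13_general t ht M δ hδ n e hsplit
end
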